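/- arXiv:2111.13814 — 3 statements merged into one kernel-verified Lean document; each statement's English description precedes it below -/
import Mathlib

section
/- Let n ≥ 4 and let A be the adjacency matrix of the transition digraph D of P_{n,3} (vertices are ordered pairs of distinct elements of [n], with an arc from (a,b) to (b,c) whenever a,b,c are pairwise distinct). Then A⁴ + A³ + (n−3)A² − A − (n−2)I = (n−2)(n−3)J, where J is the n(n−1)×n(n−1) all-ones matrix. -/
/-- Vertices of the transition digraph of `P_{n,3}`: ordered pairs of distinct
elements of `[n]`. -/
abbrev TVtx (n : ℕ) := {p : Fin n × Fin n // p.1 ≠ p.2}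

/-- Adjacency matrix of the transition digraph of `P_{n,3}`: there is an arc
from `(a,b)` to `(c,d)` iff `b = c` and `a ≠ d`. -/
def adjA (n : ℕ) : Matrix (TVtx n) (TVtx n) ℤ :=
  Matrix.of fun u v => if u.1.2 = v.1.1 ∧ u.1.1 ≠ v.1.2 then 1 else 0

namespace Aux

variable {n : ℕ}

def Smat (n : ℕ) : Matrix (TVtx n) (TVtx n) ℤ :=
  Matrix.of fun u v => if u.1.2 = v.1.1 then 1 else 0
def Tmat (n : ℕ) : Matrix (TVtx n) (TVtx n) ℤ :=
  Matrix.of fun u v => if u.1.1 = v.1.2 ∧ u.1.2 = v.1.1 then 1 else 0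
def Pmat (n : ℕ) : Matrix (TVtx n) (TVtx n) ℤ :=
  Matrix.of fun u v => if u.1.1 = v.1.1 then 1 else 0
def Qmat (n : ℕ) : Matrix (TVtx n) (TVtx n) ℤ :=
  Matrix.of fun u v => if u.1.2 = v.1.2 then 1 else 0
def Rmat (n : ℕ) : Matrix (TVtx n) (TVtx n) ℤ :=
  Matrix.of fun u v => if u.1.1 = v.1.2 then 1 else 0
def Jmat (n : ℕ) : Matrix (TVtx n) (TVtx n) ℤ :=
  Matrix.of fun _ _ => 1

lemma sum_tvtx (f : Fin n × Fin n → ℤ) :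
    ∑ w : TVtx n, f w.1 = ∑ p : Fin n × Fin n, if p.1 ≠ p.2 then f p else 0 := by
  rw [← Finset.sum_filter]
  exact (Finset.sum_subtype _ (fun x => by simp) f).symm

lemma sum_pair (p₀ : Fin n × Fin n) {C : Prop} [Decidable C] (f : TVtx n → ℤ)
    (h : ∀ w : TVtx n, f w = if (w.1 = p₀ ∧ C) then 1 else 0) :
    ∑ w : TVtx n, f w = if p₀.1 ≠ p₀.2 ∧ C then 1 else 0 := by
  simp only [h]
  rw [sum_tvtx (fun p => if p = p₀ ∧ C then 1 else 0)]
  by_cases hC : C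
  · simp only [hC, and_true]
    rw [Finset.sum_congr rfl (fun p _ => show (if p.1 ≠ p.2 then (if p = p₀ then (1:ℤ) else 0) else 0) = if p = p₀ then (if p₀.1 ≠ p₀.2 then 1 else 0) else 0 by split_ifs <;> simp_all)]
    rw [Finset.sum_ite_eq' Finset.univ p₀]
    simp
  · simp [hC]

lemma sum_line2 (y₀ : Fin n) {C : Prop} [Decidable C] (f : TVtx n → ℤ)
    (h : ∀ w : TVtx n, f w = if (w.1.2 = y₀ ∧ C) then 1 else 0) :
    ∑ w : TVtx n, f w = if C then ((n : ℤ) - 1) else 0 := by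
  simp only [h]
  rw [sum_tvtx (fun p => if p.2 = y₀ ∧ C then 1 else 0)]
  by_cases hC : C
  · simp only [hC, and_true, if_true]
    rw [Fintype.sum_prod_type]
    rw [Finset.sum_congr rfl (fun x _ => show (∑ y, if x ≠ y then (if y = y₀ then (1:ℤ) else 0) else 0) = 1 - if x = y₀ then 1 else 0 from ?_)]
    · rw [Finset.sum_sub_distrib, Finset.sum_const, Fintype.sum_ite_eq']
      simp [mul_comm]
    · rw [Finset.sum_congr rfl (fun y _ => show (if x ≠ y then (if y = y₀ then (1:ℤ) else 0) else 0) = if y = y₀ then (if x ≠ y₀ then 1 else 0) else 0 by split_ifs <;> simp_all)]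
      rw [Finset.sum_ite_eq' Finset.univ y₀]
      split_ifs <;> simp_all
  · simp [hC]

lemma hSS : Smat n * Smat n = Jmat n - Smat n := by
  ext u v
  rw [Matrix.mul_apply, sum_pair (u.1.2, v.1.1) (C := True) _ (fun w => by
    simp only [Smat, Matrix.of_apply, ite_mul, one_mul, zero_mul, Prod.ext_iff]
    split_ifs <;> simp_all)]
  simp only [Jmat, Smat, Matrix.sub_apply, Matrix.of_apply]
  split_ifs <;> simp_all

lemma hTT : Tmat n * Tmat n = 1 := by
  ext u v
  rw [Matrix.mul_apply, sum_pair (u.1.2, u.1.1) (C := (u.1.1 = v.1.1 ∧ u.1.2 = v.1.2)) _ (fun w => by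
    simp only [Tmat, Matrix.of_apply, ite_mul, one_mul, zero_mul, Prod.ext_iff]
    split_ifs <;> simp_all)]
  have := u.2
  rw [Matrix.one_apply]
  split_ifs with h1 h2 h2 <;> simp_all [Subtype.ext_iff, Prod.ext_iff]

lemma hST : Smat n * Tmat n = Qmat n := by
  ext u v
  rw [Matrix.mul_apply, sum_pair (v.1.2, v.1.1) (C := (u.1.2 = v.1.2)) _ (fun w => by
    simp only [Smat, Tmat, Matrix.of_apply, ite_mul, one_mul, zero_mul, Prod.ext_iff]
    split_ifs <;> simp_all)]
  have := v.2
  simp only [Qmat, Matrix.of_apply]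
  split_ifs <;> simp_all

lemma hTS : Tmat n * Smat n = Pmat n := by
  ext u v
  rw [Matrix.mul_apply, sum_pair (u.1.2, u.1.1) (C := (u.1.1 = v.1.1)) _ (fun w => by
    simp only [Smat, Tmat, Matrix.of_apply, ite_mul, one_mul, zero_mul, Prod.ext_iff]
    split_ifs <;> simp_all)]
  have := u.2
  simp only [Pmat, Matrix.of_apply]
  split_ifs <;> simp_all

lemma hPS : Pmat n * Smat n = Jmat n - Pmat n := by
  ext u v
  rw [Matrix.mul_apply, sum_pair (u.1.1, v.1.1) (C := True) _ (fun w => by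
    simp only [Pmat, Smat, Matrix.of_apply, ite_mul, one_mul, zero_mul, Prod.ext_iff]
    split_ifs <;> simp_all)]
  simp only [Jmat, Pmat, Matrix.sub_apply, Matrix.of_apply]
  split_ifs <;> simp_all

lemma hPT : Pmat n * Tmat n = Rmat n := by
  ext u v
  rw [Matrix.mul_apply, sum_pair (v.1.2, v.1.1) (C := (u.1.1 = v.1.2)) _ (fun w => by
    simp only [Pmat, Tmat, Matrix.of_apply, ite_mul, one_mul, zero_mul, Prod.ext_iff]
    split_ifs <;> simp_all)]
  have := v.2
  simp only [Rmat, Matrix.of_apply]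
  split_ifs <;> simp_all

lemma hQT : Qmat n * Tmat n = Smat n := by
  ext u v
  rw [Matrix.mul_apply, sum_pair (v.1.2, v.1.1) (C := (u.1.2 = v.1.1)) _ (fun w => by
    simp only [Qmat, Tmat, Matrix.of_apply, ite_mul, one_mul, zero_mul, Prod.ext_iff]
    split_ifs <;> simp_all)]
  have := v.2
  simp only [Smat, Matrix.of_apply]
  split_ifs <;> simp_all

lemma hRT : Rmat n * Tmat n = Pmat n := by
  ext u v
  rw [Matrix.mul_apply, sum_pair (v.1.2, v.1.1) (C := (u.1.1 = v.1.1)) _ (fun w => by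
    simp only [Rmat, Tmat, Matrix.of_apply, ite_mul, one_mul, zero_mul, Prod.ext_iff]
    split_ifs <;> simp_all)]
  have := v.2
  simp only [Pmat, Matrix.of_apply]
  split_ifs <;> simp_all

lemma hJT : Jmat n * Tmat n = Jmat n := by
  ext u v
  rw [Matrix.mul_apply, sum_pair (v.1.2, v.1.1) (C := True) _ (fun w => by
    simp only [Jmat, Tmat, Matrix.of_apply, one_mul, Prod.ext_iff]
    split_ifs <;> simp_all)]
  have := v.2
  simp only [Jmat, Matrix.of_apply]
  split_ifs <;> simp_all

lemma hQS : Qmat n * Smat n = ((n : ℤ) - 1) • Smat n := by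
  ext u v
  rw [Matrix.mul_apply, sum_line2 v.1.1 (C := (u.1.2 = v.1.1)) _ (fun w => by
    simp only [Qmat, Smat, Matrix.of_apply, ite_mul, one_mul, zero_mul]
    split_ifs <;> simp_all)]
  simp only [Smat, Matrix.smul_apply, Matrix.of_apply, smul_eq_mul]
  split_ifs <;> simp_all

lemma hRS : Rmat n * Smat n = ((n : ℤ) - 1) • Pmat n := by
  ext u v
  rw [Matrix.mul_apply, sum_line2 v.1.1 (C := (u.1.1 = v.1.1)) _ (fun w => by
    simp only [Rmat, Smat, Matrix.of_apply, ite_mul, one_mul, zero_mul]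
    split_ifs <;> simp_all)]
  simp only [Pmat, Matrix.smul_apply, Matrix.of_apply, smul_eq_mul]
  split_ifs <;> simp_all

lemma hJS : Jmat n * Smat n = ((n : ℤ) - 1) • Jmat n := by
  ext u v
  rw [Matrix.mul_apply, sum_line2 v.1.1 (C := True) _ (fun w => by
    simp only [Jmat, Smat, Matrix.of_apply, one_mul]
    split_ifs <;> simp_all)]
  simp [Jmat]

lemma hA : adjA n = Smat n - Tmat n := by
  ext u v
  simp only [adjA, Smat, Tmat, Matrix.sub_apply, Matrix.of_apply]
  split_ifs <;> simp_all

lemma h2 : (adjA n) ^ 2 = Jmat n - Smat n - Qmat n - Pmat n + 1 := by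
  rw [pow_two, hA, sub_mul, mul_sub, mul_sub, hSS, hST, hTS, hTT]
  abel

lemma h3 : (adjA n) ^ 3 =
    ((n : ℤ) - 4) • Jmat n + (4 - (n : ℤ)) • Smat n + Pmat n + Qmat n + Rmat n - Tmat n := by
  rw [pow_succ, h2, hA]
  simp only [sub_mul, add_mul, mul_sub, one_mul, hJS, hJT, hSS, hST, hQS, hQT, hPS, hPT]
  module

lemma h4 : (adjA n) ^ 4 =
    ((n : ℤ) * (n : ℤ) - 7 * (n : ℤ) + 13) • Jmat n + (2 * (n : ℤ) - 6) • Smat n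
      + ((n : ℤ) - 4) • Pmat n + ((n : ℤ) - 4) • Qmat n - Rmat n + 1 := by
  rw [show (4 : ℕ) = 3 + 1 from rfl, pow_succ, h3, hA]
  simp only [sub_mul, add_mul, mul_sub, one_mul, smul_mul_assoc,
    hJS, hJT, hSS, hST, hQS, hQT, hPS, hPT, hRS, hRT, hTS, hTT]
  module

end Aux

theorem adjA_poly_identity (n : ℕ) (hn : 4 ≤ n) :
    (adjA n) ^ 4 + (adjA n) ^ 3 + ((n : ℤ) - 3) • (adjA n) ^ 2 - adjA n -
        ((n : ℤ) - 2) • (1 : Matrix (TVtx n) (TVtx n) ℤ) =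
      (((n : ℤ) - 2) * ((n : ℤ) - 3)) • Matrix.of (fun _ _ => (1 : ℤ)) := by
  show _ = (((n : ℤ) - 2) * ((n : ℤ) - 3)) • Aux.Jmat n
  rw [Aux.h4, Aux.h3, Aux.h2, Aux.hA]
  module
end

section
/- Let n ≥ 4 and let A be the adjacency matrix of the transition digraph of P_{n,3}. Then the characteristic polynomial of A is (λ − (n−2)) · (λ−1)^{(n−1)(n−2)/2} · (λ+1)^{n(n−3)/2} · (λ² + λ + n − 2)^{n−1}. -/
open Polynomial
set_option synthInstance.maxHeartbeats 400000
set_option maxHeartbeats 1000000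

namespace AdjAux
open Matrix

noncomputable section

abbrev K : Type := RatFunc ℚ

def xx : K := RatFunc.X

variable (n : ℕ)

def swapV (u : TVtx n) : TVtx n := ⟨(u.1.2, u.1.1), Ne.symm u.2⟩

@[simp] lemma swapV_swapV (u : TVtx n) : swapV n (swapV n u) = u := rfl

def Pm : Matrix (TVtx n) (TVtx n) K := Matrix.of fun u v => if v = swapV n u then 1 else 0
def Rm : Matrix (TVtx n) (Fin n) K := Matrix.of fun u a => if u.1.2 = a then 1 else 0
def Lm : Matrix (Fin n) (TVtx n) K := Matrix.of fun a v => if v.1.1 = a then 1 else 0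

lemma Pm_mul_Pm : Pm n * Pm n = 1 := by
  ext u v
  simp only [Pm, mul_apply, Matrix.of_apply, Matrix.one_apply, ite_mul, one_mul, zero_mul,
    Finset.sum_ite_eq', Finset.mem_univ, if_true, swapV_swapV]
  simp [eq_comm]

lemma Rm_mul_Lm (u v : TVtx n) : (Rm n * Lm n) u v = if u.1.2 = v.1.1 then 1 else 0 := by
  simp [Rm, Lm, mul_apply]

lemma sum_TVtx {M : Type*} [AddCommMonoid M] (f : Fin n × Fin n → M) :
    ∑ u : TVtx n, f u.1 = ∑ p : Fin n × Fin n, if p.1 ≠ p.2 then f p else 0 := by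
  classical
  rw [← Finset.sum_filter]
  exact (Finset.sum_subtype _ (by simp) f).symm

lemma Lm_mul_Rm (a d : Fin n) : (Lm n * Rm n) a d = if a = d then 0 else 1 := by
  simp only [Lm, Rm, mul_apply, Matrix.of_apply]
  rw [sum_TVtx n (fun p => (if p.1 = a then (1:K) else 0) * (if p.2 = d then 1 else 0))]
  rw [Fintype.sum_prod_type]
  simp [Finset.sum_ite_eq', ite_and, apply_ite]

lemma Pm_mul_Rm (u : TVtx n) (d : Fin n) :
    (Pm n * Rm n) u d = if u.1.1 = d then 1 else 0 := by
  simp only [Pm, Rm, mul_apply, Matrix.of_apply, ite_mul, one_mul, zero_mul,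
    Finset.sum_ite_eq', Finset.mem_univ, if_true]
  rfl

lemma Lm_mul_Pm_mul_Rm (hn : 1 ≤ n) (a d : Fin n) :
    (Lm n * (Pm n * Rm n)) a d = if a = d then (n : K) - 1 else 0 := by
  rw [mul_apply]
  simp only [Pm_mul_Rm, Lm, Matrix.of_apply]
  rw [sum_TVtx n (fun p => (if p.1 = a then (1:K) else 0) * (if p.1 = d then 1 else 0))]
  rw [Fintype.sum_prod_type]
  simp only [ite_mul, one_mul, zero_mul, ← ite_and]
  by_cases h : a = d
  · subst h
    simp only [and_self, if_true]
    have h1 : ∀ x : Fin n, (∑ x1 : Fin n, if x ≠ x1 ∧ x = a then (1:K) else 0)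
        = if x = a then ∑ x1 : Fin n, (if x ≠ x1 then (1:K) else 0) else 0 := by
      intro x
      by_cases hx : x = a <;> simp [hx]
    simp only [h1, Finset.sum_ite_eq', Finset.mem_univ, if_true]
    have h2 : ∑ x1 : Fin n, (if a ≠ x1 then (1:K) else 0)
        = ((Finset.univ.filter (fun x1 => a ≠ x1)).card : K) := by
      rw [Finset.sum_boole]
    rw [h2]
    have h3 : Finset.univ.filter (fun x1 => a ≠ x1) = Finset.univ.erase a := by
      ext y; simp [eq_comm, Ne]
    rw [h3, Finset.card_erase_of_mem (Finset.mem_univ a)]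
    simp only [Finset.card_univ, Fintype.card_fin]
    have : (1:ℕ) ≤ n := hn
    push_cast [this]
    ring
  · rw [if_neg h]
    apply Finset.sum_eq_zero; intro x _
    apply Finset.sum_eq_zero; intro y _
    rw [if_neg]
    rintro ⟨-, rfl, rfl⟩
    exact h rfl

abbrev Sn (n : ℕ) := {p : Fin n × Fin n // p.1 < p.2}

def eps : Bool × Sn n ≃ TVtx n where
  toFun bs := if bs.1 then ⟨(bs.2.1.2, bs.2.1.1), ne_of_gt bs.2.2⟩ else ⟨bs.2.1, ne_of_lt bs.2.2⟩
  invFun u := if h : u.1.1 < u.1.2 then (false, ⟨u.1, h⟩)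
    else (true, ⟨(u.1.2, u.1.1), lt_of_le_of_ne (not_lt.1 h) (Ne.symm u.2)⟩)
  left_inv := by
    rintro ⟨b, s⟩
    cases b <;> simp [lt_asymm s.2, not_lt.2 (le_of_lt s.2), s.2]
  right_inv := by
    rintro ⟨⟨p1, p2⟩, hp⟩
    by_cases h : p1 < p2 <;> simp [h]

lemma card_TVtx : Fintype.card (TVtx n) = n * n - n := by
  have h1 : Fintype.card {p : Fin n × Fin n // p.1 = p.2} = n := by
    have e : {p : Fin n × Fin n // p.1 = p.2} ≃ Fin n :=
      { toFun := fun p => p.1.1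
        invFun := fun a => ⟨(a, a), rfl⟩
        left_inv := by rintro ⟨⟨a, b⟩, h⟩; cases h; rfl
        right_inv := fun a => rfl }
    simp [Fintype.card_congr e]
  have h2 := Fintype.card_subtype_compl (fun p : Fin n × Fin n => p.1 = p.2)
  simp only [h1, Fintype.card_prod, Fintype.card_fin] at h2
  exact h2

lemma two_card_Sn : 2 * Fintype.card (Sn n) = n * n - n := by
  have := Fintype.card_congr (eps n)
  simp only [Fintype.card_prod, Fintype.card_bool, card_TVtx] at this
  omega

set_option maxHeartbeats 1000000 in
lemma det_xx_sub_Pm :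
    (xx • (1 : Matrix (TVtx n) (TVtx n) K) - Pm n).det
      = (xx ^ 2 - 1) ^ Fintype.card (Sn n) := by
  rw [← Matrix.det_submatrix_equiv_self (eps n)]
  have hB : (xx • (1 : Matrix (TVtx n) (TVtx n) K) - Pm n).submatrix (eps n) (eps n)
      = Matrix.blockDiagonal (fun _ : Sn n =>
          Matrix.of (fun b c : Bool => if b = c then xx else -1)) := by
    ext ⟨b, s⟩ ⟨c, t⟩
    simp only [Matrix.submatrix_apply, Matrix.sub_apply, Matrix.smul_apply, Matrix.one_apply,
      Matrix.blockDiagonal_apply, Pm, Matrix.of_apply, eps, Equiv.coe_fn_mk, swapV]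
    by_cases hst : s = t
    · subst hst
      cases b <;> cases c <;>
        simp [Subtype.ext_iff, Prod.ext_iff, (lt_irrefl _ : ¬ s.1.1 < s.1.1),
          (ne_of_lt s.2 : s.1.1 ≠ s.1.2), (ne_of_gt s.2 : s.1.2 ≠ s.1.1), smul_eq_mul]
    · have hne : (s : Fin n × Fin n) ≠ t := fun h => hst (Subtype.ext h)
      have hs := s.2
      have ht := t.2
      have h1 : ¬ ((s:Fin n × Fin n).1 = (t:Fin n × Fin n).1 ∧ (s:Fin n × Fin n).2 = (t:Fin n × Fin n).2) :=
        fun ⟨x, y⟩ => hne (Prod.ext x y)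
      have h2 : ¬ ((s:Fin n × Fin n).1 = (t:Fin n × Fin n).2 ∧ (s:Fin n × Fin n).2 = (t:Fin n × Fin n).1) := by
        rintro ⟨x, y⟩
        rw [x, y] at hs
        exact absurd (lt_trans hs ht) (lt_irrefl _)
      have h3 : ¬ ((t:Fin n × Fin n).1 = (s:Fin n × Fin n).1 ∧ (t:Fin n × Fin n).2 = (s:Fin n × Fin n).2) :=
        fun ⟨x, y⟩ => h1 ⟨x.symm, y.symm⟩
      have h4 : ¬ ((t:Fin n × Fin n).1 = (s:Fin n × Fin n).2 ∧ (t:Fin n × Fin n).2 = (s:Fin n × Fin n).1) :=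
        fun ⟨x, y⟩ => h2 ⟨y.symm, x.symm⟩
      have h5 : ¬ ((s:Fin n × Fin n).2 = (t:Fin n × Fin n).2 ∧ (s:Fin n × Fin n).1 = (t:Fin n × Fin n).1) :=
        fun ⟨x, y⟩ => h1 ⟨y, x⟩
      have h6 : ¬ ((s:Fin n × Fin n).2 = (t:Fin n × Fin n).1 ∧ (s:Fin n × Fin n).1 = (t:Fin n × Fin n).2) :=
        fun ⟨x, y⟩ => h2 ⟨y, x⟩
      have h7 : ¬ ((t:Fin n × Fin n).2 = (s:Fin n × Fin n).2 ∧ (t:Fin n × Fin n).1 = (s:Fin n × Fin n).1) :=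
        fun ⟨x, y⟩ => h3 ⟨y, x⟩
      have h8 : ¬ ((t:Fin n × Fin n).2 = (s:Fin n × Fin n).1 ∧ (t:Fin n × Fin n).1 = (s:Fin n × Fin n).2) :=
        fun ⟨x, y⟩ => h4 ⟨y, x⟩
      cases b <;> cases c <;>
        simp [Subtype.ext_iff, Prod.ext_iff, hst, h1, h2, h3, h4, h5, h6, h7, h8]
  rw [hB, Matrix.det_blockDiagonal]
  have hdet : (Matrix.of (fun b c : Bool => if b = c then xx else -1)).det = xx ^ 2 - 1 := by
    rw [← Matrix.det_submatrix_equiv_self finTwoEquiv]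
    rw [Matrix.det_fin_two]
    simp [finTwoEquiv]
    ring
  simp [hdet, Finset.card_univ]

lemma det_smul_one_add_smul_J (N : ℕ) (hN : 1 ≤ N) (α β : K) (hα : α ≠ 0) :
    (α • (1 : Matrix (Fin N) (Fin N) K) + β • Matrix.of (fun _ _ => (1:K))).det
      = α ^ (N - 1) * (α + N * β) := by
  have hrw : α • (1 : Matrix (Fin N) (Fin N) K) + β • Matrix.of (fun _ _ => (1:K))
      = α • (1 + Matrix.replicateCol Unit (fun _ : Fin N => α⁻¹ * β) * Matrix.replicateRow Unit (fun _ : Fin N => (1:K))) := by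
    ext i j
    simp only [Matrix.add_apply, Matrix.smul_apply, Matrix.one_apply, Matrix.of_apply,
      Matrix.mul_apply, Matrix.replicateCol_apply, Matrix.replicateRow_apply, smul_eq_mul, Finset.univ_unique,
      Finset.sum_singleton, mul_one, mul_add]
    field_simp
  rw [hrw, Matrix.det_smul, Matrix.det_one_add_replicateCol_mul_replicateRow]
  simp only [dotProduct, Finset.sum_const, Finset.card_univ, Fintype.card_fin,
    nsmul_eq_mul, mul_one, Fintype.card_fin]
  have hNe : α ^ N = α ^ (N - 1) * α := by
    conv_lhs => rw [show N = (N - 1) + 1 by omega]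
    rw [pow_succ]
  rw [hNe]
  field_simp

lemma det_smul_one_sub_mul {I J : Type*} [Fintype I] [DecidableEq I] [Fintype J] [DecidableEq J]
    (q : K) (hq : q ≠ 0) (B : Matrix I J K) (C : Matrix J I K) :
    (q • (1 : Matrix I I K) - B * C).det
      = q ^ Fintype.card I * (1 - q⁻¹ • (C * B)).det := by
  have h1 : q • (1 : Matrix I I K) - B * C = q • (1 - q⁻¹ • (B * C)) := by
    rw [smul_sub, smul_smul, mul_inv_cancel₀ hq, one_smul]
  rw [h1, Matrix.det_smul]
  congr 1
  rw [show q⁻¹ • (B * C) = (q⁻¹ • B) * C from (Matrix.smul_mul q⁻¹ B C).symm,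
    Matrix.det_one_sub_mul_comm,
    show C * (q⁻¹ • B) = q⁻¹ • (C * B) from Matrix.mul_smul C q⁻¹ B]

theorem key (hn : 4 ≤ n) :
    (xx • (1 : Matrix (TVtx n) (TVtx n) K) + Pm n - Rm n * Lm n).det
      = (xx - ((n : K) - 2)) * (xx - 1) ^ ((n - 1) * (n - 2) / 2)
        * (xx + 1) ^ (n * (n - 3) / 2) * (xx ^ 2 + xx + ((n : K) - 2)) ^ (n - 1) := by
  classical
  set q : K := xx ^ 2 - 1 with hq_def
  set g : K := xx ^ 2 + xx + ((n : K) - 2) with hg_def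
  -- nonvanishing
  have hinj : Function.Injective (algebraMap ℚ[X] K) := RatFunc.algebraMap_injective ℚ
  have hxx : xx = algebraMap ℚ[X] K X := RatFunc.algebraMap_X.symm
  have hq0 : q ≠ 0 := by
    have h1 : (X ^ 2 - 1 : ℚ[X]) ≠ 0 := fun h => by
      have := congrArg (Polynomial.eval 0) h; simp at this
    have : q = algebraMap ℚ[X] K (X ^ 2 - 1) := by
      simp [hq_def, hxx, map_sub, map_pow]
    rw [this]
    exact fun h => h1 (hinj (by simpa using h))
  have hxm1 : (xx - 1 : K) ≠ 0 := by
    have h1 : (X - 1 : ℚ[X]) ≠ 0 := fun h => by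
      have := congrArg (Polynomial.eval 0) h; simp at this
    have : (xx - 1 : K) = algebraMap ℚ[X] K (X - 1) := by simp [hxx, map_sub]
    rw [this]; exact fun h => h1 (hinj (by simpa using h))
  have hxp1 : (xx + 1 : K) ≠ 0 := by
    have h1 : (X + 1 : ℚ[X]) ≠ 0 := fun h => by
      have := congrArg (Polynomial.eval 0) h; simp at this
    have : (xx + 1 : K) = algebraMap ℚ[X] K (X + 1) := by simp [hxx, map_add]
    rw [this]; exact fun h => h1 (hinj (by simpa using h))
  have hg0 : g ≠ 0 := by
    have h1 : (X ^ 2 + X + ((n : ℚ[X]) - 2) : ℚ[X]) ≠ 0 := fun h => by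
      have h2 := congrArg (Polynomial.eval 0) h
      have h4 : (4 : ℚ) ≤ (n : ℚ) := by exact_mod_cast hn
      simp only [Polynomial.eval_add, Polynomial.eval_pow, Polynomial.eval_X,
        Polynomial.eval_sub, Polynomial.eval_natCast, Polynomial.eval_ofNat,
        Polynomial.eval_zero] at h2
      norm_num at h2
      linarith
    have : g = algebraMap ℚ[X] K (X ^ 2 + X + ((n : ℚ[X]) - 2)) := by
      simp [hg_def, hxx, map_add, map_sub, map_pow, map_natCast, map_ofNat]
    rw [this]; exact fun h => h1 (hinj (by simpa using h))
  clear_value q g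
  -- exponent bookkeeping
  obtain ⟨m, rfl⟩ : ∃ m, n = m + 4 := ⟨n - 4, by omega⟩
  set h := Fintype.card (Sn (m + 4)) with hh_def
  have h2h : 2 * h = (m + 4) * (m + 4) - (m + 4) := two_card_Sn (m + 4)
  set a := (m + 4 - 1) * (m + 4 - 2) / 2 with ha_def
  set b := (m + 4) * (m + 4 - 3) / 2 with hb_def
  have ha2 : 2 * a = (m + 3) * (m + 2) := by
    have e1 : a = (m + 3) * (m + 2) / 2 := by rw [ha_def, show m + 4 - 1 = m + 3 from by omega, show m + 4 - 2 = m + 2 from by omega]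
    have e2 : 2 ∣ (m + 3) * (m + 2) := by
      rcases Nat.even_or_odd m with ⟨k, hk⟩ | ⟨k, hk⟩
      · exact Dvd.dvd.mul_left (by omega : (2:ℕ) ∣ (m + 2)) _
      · exact Dvd.dvd.mul_right (by omega : (2:ℕ) ∣ (m + 3)) _
    rw [e1, Nat.mul_div_cancel' e2]
  have hb2 : 2 * b = (m + 4) * (m + 1) := by
    have e1 : b = (m + 4) * (m + 1) / 2 := by rw [hb_def, show m + 4 - 3 = m + 1 from by omega]
    have e2 : 2 ∣ (m + 4) * (m + 1) := by
      rcases Nat.even_or_odd m with ⟨k, hk⟩ | ⟨k, hk⟩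
      · exact Dvd.dvd.mul_right (by omega : (2:ℕ) ∣ (m + 4)) _
      · exact Dvd.dvd.mul_left (by omega : (2:ℕ) ∣ (m + 1)) _
    rw [e1, Nat.mul_div_cancel' e2]
  have h2h' : 2 * h = (m + 3) * (m + 2) + 2 * (m + 3) := by
    rw [h2h]
    apply Nat.sub_eq_of_eq_add
    ring
  have hha : h = a + (m + 3) := by omega
  have hhb : h = b + (m + 4) := by
    have : 2 * h = (m + 4) * (m + 1) + 2 * (m + 4) := by
      rw [h2h]; apply Nat.sub_eq_of_eq_add; ring
    omega
  have hab : a = b + 1 := by omega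
  clear_value h a b
  -- matrices
  set M := xx • (1 : Matrix (TVtx (m + 4)) (TVtx (m + 4)) K) + Pm (m + 4)
      - Rm (m + 4) * Lm (m + 4) with hM_def
  set Q := xx • (1 : Matrix (TVtx (m + 4)) (TVtx (m + 4)) K) - Pm (m + 4) with hQ_def
  have step1 : M * Q = q • (1 : Matrix (TVtx (m + 4)) (TVtx (m + 4)) K)
      - Rm (m + 4) * (Lm (m + 4) * Q) := by
    rw [hM_def, hQ_def]
    simp only [Matrix.sub_mul, Matrix.add_mul, Matrix.mul_sub, Matrix.smul_mul, Matrix.mul_smul,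
      Matrix.one_mul, Matrix.mul_one, Pm_mul_Pm, smul_smul, smul_add, smul_sub,
      Matrix.mul_assoc]
    rw [hq_def, sub_smul, one_smul, pow_two]
    abel
  have hdet1 : M.det * Q.det = (q • (1 : Matrix (TVtx (m + 4)) (TVtx (m + 4)) K)
      - Rm (m + 4) * (Lm (m + 4) * Q)).det := by
    rw [← Matrix.det_mul, step1]
  have hdet2 := det_smul_one_sub_mul q hq0 (Rm (m + 4)) (Lm (m + 4) * Q)
  have hcardV : Fintype.card (TVtx (m + 4)) = 2 * h := by
    rw [card_TVtx]; omega
  have hLQR : (Lm (m + 4) * Q) * Rm (m + 4)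
      = xx • (Lm (m + 4) * Rm (m + 4)) - Lm (m + 4) * (Pm (m + 4) * Rm (m + 4)) := by
    rw [hQ_def, Matrix.mul_sub, Matrix.mul_smul, Matrix.mul_one, Matrix.sub_mul,
      Matrix.smul_mul, Matrix.mul_assoc]
  have hD : (1 : Matrix (Fin (m + 4)) (Fin (m + 4)) K) - q⁻¹ • ((Lm (m + 4) * Q) * Rm (m + 4))
      = (q⁻¹ * g) • (1 : Matrix (Fin (m + 4)) (Fin (m + 4)) K)
        + (-(q⁻¹ * xx)) • Matrix.of (fun _ _ => (1 : K)) := by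
    rw [hLQR]
    ext a' d'
    simp only [Matrix.sub_apply, Matrix.add_apply, Matrix.smul_apply, Matrix.one_apply,
      Matrix.of_apply, Lm_mul_Rm, Lm_mul_Pm_mul_Rm (m + 4) (by omega), smul_eq_mul]
    by_cases had : a' = d'
    · subst had
      simp only [if_true]
      push_cast
      field_simp [hq0]
      rw [hq_def, hg_def]
      push_cast
      ring
    · simp only [had, if_false]
      ring
  have hdetD : ((1 : Matrix (Fin (m + 4)) (Fin (m + 4)) K)
      - q⁻¹ • ((Lm (m + 4) * Q) * Rm (m + 4))).det
      = (q⁻¹ * g) ^ (m + 3) * ((q⁻¹ * g) + ((m + 4 : ℕ) : K) * (-(q⁻¹ * xx))) := by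
    rw [hD, det_smul_one_add_smul_J (m + 4) (by omega) _ _ (mul_ne_zero (inv_ne_zero hq0) hg0)]
    norm_num
  have hdetQ : Q.det = q ^ h := by
    rw [hQ_def, det_xx_sub_Pm, ← hq_def, ← hh_def]
  -- combine
  have hmain : M.det * q ^ h
      = q ^ (2 * h) * ((q⁻¹ * g) ^ (m + 3) * ((q⁻¹ * g) + ((m + 4 : ℕ) : K) * (-(q⁻¹ * xx)))) := by
    rw [← hdetQ, hdet1, hdet2, hcardV, hdetD]
  -- final algebra
  have e1 : (q⁻¹ * g) + ((m + 4 : ℕ) : K) * (-(q⁻¹ * xx))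
      = q⁻¹ * ((xx - 1) * (xx - (((m + 4 : ℕ) : K) - 2))) := by
    rw [hg_def]
    push_cast
    field_simp
    ring
  have hqfact : q = (xx - 1) * (xx + 1) := by rw [hq_def]; ring
  have key2 : q ^ (2 * h) * ((q⁻¹ * g) ^ (m + 3) * ((q⁻¹ * g) + ((m + 4 : ℕ) : K) * (-(q⁻¹ * xx))))
      = ((xx - (((m + 4 : ℕ) : K) - 2)) * (xx - 1) ^ a * (xx + 1) ^ b * g ^ (m + 3)) * q ^ h := by
    rw [e1, mul_pow]
    have e2 : q ^ (2 * h) = q ^ h * q ^ b * q ^ (m + 4) := by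
      rw [show 2 * h = h + b + (m + 4) from by omega, pow_add, pow_add]
    have e3 : (q⁻¹) ^ (m + 3) * q⁻¹ = (q⁻¹) ^ (m + 4) := by rw [← pow_succ]
    have e4 : q ^ (m + 4) * (q⁻¹) ^ (m + 4) = 1 := by
      rw [← mul_pow, mul_inv_cancel₀ hq0, one_pow]
    have e5 : q ^ b = (xx - 1) ^ b * (xx + 1) ^ b := by rw [hqfact, mul_pow]
    have e6 : (xx - 1) ^ b * (xx - 1) = (xx - 1) ^ a := by rw [← pow_succ, hab]
    calc q ^ (2 * h) * ((q⁻¹) ^ (m + 3) * g ^ (m + 3)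
            * (q⁻¹ * ((xx - 1) * (xx - (((m + 4 : ℕ) : K) - 2)))))
        = (q ^ (m + 4) * (q⁻¹) ^ (m + 4)) * (q ^ h * ((xx - 1) ^ b * (xx - 1)) * (xx + 1) ^ b
            * g ^ (m + 3) * (xx - (((m + 4 : ℕ) : K) - 2))) := by
          rw [e2, e5, ← e3, ← e4]
          ring
      _ = ((xx - (((m + 4 : ℕ) : K) - 2)) * (xx - 1) ^ a * (xx + 1) ^ b * g ^ (m + 3)) * q ^ h := by
          rw [e4, e6]
          ring
  have hfinal : M.det * q ^ h
      = ((xx - (((m + 4 : ℕ) : K) - 2)) * (xx - 1) ^ a * (xx + 1) ^ b * g ^ (m + 3)) * q ^ h := by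
    rw [hmain, key2]
  have := mul_right_cancel₀ (pow_ne_zero h hq0) hfinal
  rw [this, show m + 4 - 1 = m + 3 from by omega]

lemma charmatrix_map_eq (n : ℕ) :
    (Matrix.charmatrix (adjA n)).map
        ((algebraMap ℚ[X] K).comp (Polynomial.mapRingHom (Int.castRingHom ℚ)))
      = xx • (1 : Matrix (TVtx n) (TVtx n) K) + Pm n - Rm n * Lm n := by
  classical
  set φ := (algebraMap ℚ[X] K).comp (Polynomial.mapRingHom (Int.castRingHom ℚ)) with hφ
  have hXX : φ X = xx := by
    simp [hφ, RatFunc.algebraMap_X, xx]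
  have hC : ∀ k : ℤ, φ (C k) = (k : K) := by
    intro k
    have : φ (C k) = (φ.comp (C : ℤ →+* ℤ[X])) k := rfl
    rw [this, eq_intCast]
  ext u v
  have hsw : (v = swapV n u) ↔ (u.1.2 = v.1.1 ∧ u.1.1 = v.1.2) := by
    constructor
    · rintro rfl; exact ⟨rfl, rfl⟩
    · rintro ⟨h1, h2⟩
      exact Subtype.ext (Prod.ext h1.symm h2.symm)
  rw [Matrix.map_apply, Matrix.charmatrix_apply, map_sub]
  rw [show (Matrix.diagonal fun _ : TVtx n => (X : ℤ[X])) u v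
      = if u = v then X else 0 from Matrix.diagonal_apply _ u v]
  rw [apply_ite φ, hXX, map_zero]
  simp only [Matrix.add_apply, Matrix.sub_apply, Matrix.smul_apply, Matrix.one_apply,
    Rm_mul_Lm, Pm, Matrix.of_apply, smul_eq_mul]
  by_cases h1 : u = v
  · subst h1
    have e1 : adjA n u u = 0 := by
      simp [adjA, Ne.symm u.2]
    have e2 : ¬ (u = swapV n u) := fun h => u.2 ((hsw.1 h).1.symm)
    have e3 : ¬ ((u : Fin n × Fin n).2 = (u : Fin n × Fin n).1) := Ne.symm u.2
    rw [e1]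
    simp [e2, e3, hC]
  · by_cases h2 : (u : Fin n × Fin n).2 = (v : Fin n × Fin n).1
    · by_cases h3 : (u : Fin n × Fin n).1 = (v : Fin n × Fin n).2
      · have e1 : adjA n u v = 0 := by simp [adjA, h2, h3]
        have e2 : v = swapV n u := hsw.2 ⟨h2, h3⟩
        rw [e1]
        simp [h1, h2, e2, hC]
      · have e1 : adjA n u v = 1 := by simp [adjA, h2, h3]
        have e2 : ¬ (v = swapV n u) := fun h => h3 (hsw.1 h).2
        rw [e1]
        simp [h1, h2, e2, hC]
    · have e1 : adjA n u v = 0 := by simp [adjA, h2]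
      have e2 : ¬ (v = swapV n u) := fun h => h2 (hsw.1 h).1
      rw [e1]
      simp [h1, h2, e2, hC]

end
end AdjAux

theorem adjA_charpoly (n : ℕ) (hn : 4 ≤ n) :
    (adjA n).charpoly =
      (X - C ((n : ℤ) - 2)) * (X - 1) ^ ((n - 1) * (n - 2) / 2) *
        (X + 1) ^ (n * (n - 3) / 2) *
        (X ^ 2 + X + C ((n : ℤ) - 2)) ^ (n - 1) := by
  classical
  set φ := (algebraMap ℚ[X] AdjAux.K).comp (Polynomial.mapRingHom (Int.castRingHom ℚ)) with hφ
  have hφinj : Function.Injective φ := by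
    rw [hφ, RingHom.coe_comp]
    exact Function.Injective.comp (RatFunc.algebraMap_injective ℚ)
      (Polynomial.map_injective (Int.castRingHom ℚ) Int.cast_injective)
  apply hφinj
  have hXX : φ X = AdjAux.xx := by simp [hφ, RatFunc.algebraMap_X, AdjAux.xx]
  have hC : ∀ k : ℤ, φ (C k) = (k : AdjAux.K) := by
    intro k
    have : φ (C k) = (φ.comp (C : ℤ →+* ℤ[X])) k := rfl
    rw [this, eq_intCast]
  have lhs : φ ((adjA n).charpoly)
      = (AdjAux.xx • (1 : Matrix (TVtx n) (TVtx n) AdjAux.K) + AdjAux.Pm n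
          - AdjAux.Rm n * AdjAux.Lm n).det := by
    rw [Matrix.charpoly, RingHom.map_det, RingHom.mapMatrix_apply, hφ,
      AdjAux.charmatrix_map_eq n]
  rw [lhs, AdjAux.key n hn]
  simp only [map_mul, map_pow, map_sub, map_add, map_one, hXX, hC]
  push_cast
  ring
end

section
/- Suppose A is a square matrix of size n(n−1) satisfying A·1 = (n−2)·1, with traces tr(A)=0, tr(A²)=0, tr(A³)=n(n−1)(n−2), and characteristic polynomial of the form (λ−(n−2))(λ−1)^{s₁}(λ+1)^{s₂}(λ²+λ+n−2)^{s₃} with s₁+s₂+2s₃ = n(n−1)−1. Then s₁ = (n−1)(n−2)/2, s₂ = n(n−3)/2, and s₃ = n−1. -/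
open Polynomial

section Helpers

lemma coeff_comp_neg_X (p : ℂ[X]) (k : ℕ) :
    (p.comp (-X)).coeff k = (-1) ^ k * p.coeff k := by
  induction p using Polynomial.induction_on' with
  | add p q hp hq => simp [add_comp, hp, hq, mul_add]
  | monomial m a =>
      rw [show ((monomial m a : ℂ[X])) = C a * X ^ m by simp [C_mul_X_pow_eq_monomial]]
      have hpow : ((-X : ℂ[X])) ^ m = C ((-1) ^ m) * X ^ m := by
        rw [show (-X : ℂ[X]) = C (-1) * X by simp, mul_pow, ← map_pow]
      rw [mul_comp, C_comp, pow_comp, X_comp, hpow, ← mul_assoc, ← map_mul,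
        coeff_C_mul, coeff_C_mul, coeff_X_pow]
      rcases eq_or_ne m k with rfl | h
      · simp; ring
      · simp [h, Ne.symm h]

lemma multiset_sum_sq (T : Multiset ℂ) :
    T.sum ^ 2 = (T.map (fun x => x ^ 2)).sum + 2 * T.esymm 2 := by
  induction T using Multiset.induction_on with
  | empty => simp [Multiset.esymm, Multiset.powersetCard_eq_empty 2 (s := (0 : Multiset ℂ)) (by simp)]
  | cons a T ih =>
      have hmap : (Multiset.map (fun x => a * x) T).sum = a * T.sum := by
        simpa using (Multiset.sum_map_mul_left (s := T) (a := a) (f := fun i => i))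
      have hcons : (a ::ₘ T).esymm 2 = T.esymm 2 + a * T.sum := by
        rw [Multiset.esymm, Multiset.powersetCard_cons, Multiset.map_add, Multiset.sum_add,
          Multiset.powersetCard_one, Multiset.map_map, Multiset.map_map]
        simp only [Multiset.esymm, Function.comp, Multiset.prod_cons, Multiset.prod_singleton]
        rw [hmap]
      simp only [Multiset.sum_cons, Multiset.map_cons, hcons]
      linear_combination ih

variable {m : Type*} [Fintype m] [DecidableEq m]

lemma map_C_neg (A : Matrix m m ℂ) : (-A).map ⇑C = -(A.map ⇑C) := by
  ext i j; simp

lemma charpolyRev_neg (A : Matrix m m ℂ) :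
    (-A).charpolyRev = (A.charpolyRev).comp (-X) := by
  rw [comp_eq_aeval, Matrix.charpolyRev, Matrix.charpolyRev,
    (aeval (-X : ℂ[X]) : ℂ[X] →ₐ[ℂ] ℂ[X]).map_det]
  congr 1
  ext i j
  rcases eq_or_ne i j with rfl | h
  · simp [Matrix.map_apply, Matrix.sub_apply, Matrix.one_apply, Matrix.smul_apply,
      smul_eq_mul, map_C_neg]
  · simp [Matrix.map_apply, Matrix.sub_apply, Matrix.one_apply, Matrix.smul_apply,
      smul_eq_mul, map_C_neg, h]

lemma charpolyRev_sq (A : Matrix m m ℂ) :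
    Polynomial.expand ℂ 2 ((A ^ 2).charpolyRev) = A.charpolyRev * (-A).charpolyRev := by
  rw [Matrix.charpolyRev, (Polynomial.expand ℂ 2 : ℂ[X] →ₐ[ℂ] ℂ[X]).map_det]
  have hmap : (Polynomial.expand ℂ 2 : ℂ[X] →ₐ[ℂ] ℂ[X]).mapMatrix
        ((1 : Matrix m m ℂ[X]) - (X : ℂ[X]) • (A ^ 2).map ⇑C)
      = 1 - (X ^ 2 : ℂ[X]) • (A ^ 2).map ⇑C := by
    ext i j
    rcases eq_or_ne i j with rfl | h
    · simp [Matrix.map_apply, Matrix.sub_apply, Matrix.one_apply, Matrix.smul_apply,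
        smul_eq_mul]
    · simp [Matrix.map_apply, Matrix.sub_apply, Matrix.one_apply, Matrix.smul_apply,
        smul_eq_mul, h]
  rw [hmap]
  have hfac : (1 : Matrix m m ℂ[X]) - (X ^ 2 : ℂ[X]) • (A ^ 2).map ⇑C
      = ((1 : Matrix m m ℂ[X]) - (X : ℂ[X]) • A.map ⇑C) * (1 - (X : ℂ[X]) • (-A).map ⇑C) := by
    have hB : ((X : ℂ[X]) • A.map ⇑C) * ((X : ℂ[X]) • A.map ⇑C)
        = (X ^ 2 : ℂ[X]) • (A ^ 2).map ⇑C := by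
      rw [smul_mul_smul_comm, ← sq, pow_two A, Matrix.map_mul]
    rw [map_C_neg, smul_neg, sub_neg_eq_add]
    rw [sub_mul, one_mul, mul_add, mul_one, ← hB]
    abel
  rw [hfac, Matrix.det_mul, Matrix.charpolyRev, Matrix.charpolyRev]

lemma trace_sq (A : Matrix m m ℂ) :
    (A ^ 2).trace = A.trace ^ 2 - 2 * (A.charpolyRev).coeff 2 := by
  have h := congrArg (fun p : ℂ[X] => p.coeff 2) (charpolyRev_sq A)
  rw [Polynomial.coeff_expand (by norm_num : 0 < 2)] at h
  norm_num at h
  rw [Polynomial.coeff_mul] at h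
  rw [Finset.Nat.sum_antidiagonal_eq_sum_range_succ_mk] at h
  simp only [Finset.sum_range_succ, Finset.sum_range_zero] at h
  rw [charpolyRev_neg] at h
  simp only [coeff_comp_neg_X] at h
  norm_num at h
  have h0 : (A.charpolyRev).coeff 0 = 1 := by
    rw [Polynomial.coeff_zero_eq_eval_zero, Matrix.eval_charpolyRev]
  rw [h0] at h
  linear_combination -h
end Helpers

/-- If a square matrix of size `n(n-1)` has row sums `n-2`, traces
`tr A = 0`, `tr A² = 0`, `tr A³ = n(n-1)(n-2)`, and characteristic polynomial of
the form `(λ-(n-2))(λ-1)^{s₁}(λ+1)^{s₂}(λ²+λ+n-2)^{s₃}` with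
`s₁+s₂+2s₃ = n(n-1)-1`, then `s₁ = (n-1)(n-2)/2`, `s₂ = n(n-3)/2`, `s₃ = n-1`. -/
theorem multiplicities_determined (n : ℕ) (hn : 4 ≤ n)
    (A : Matrix (Fin (n * (n - 1))) (Fin (n * (n - 1))) ℂ)
    (h1 : A.mulVec (fun _ => 1) = fun _ => (n : ℂ) - 2)
    (htr1 : A.trace = 0) (htr2 : (A ^ 2).trace = 0)
    (htr3 : (A ^ 3).trace = (n : ℂ) * ((n : ℂ) - 1) * ((n : ℂ) - 2))
    (s₁ s₂ s₃ : ℕ)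
    (hcp : A.charpoly =
      (X - C ((n : ℂ) - 2)) * (X - 1) ^ s₁ * (X + 1) ^ s₂ *
        (X ^ 2 + X + C ((n : ℂ) - 2)) ^ s₃)
    (hs : s₁ + s₂ + 2 * s₃ = n * (n - 1) - 1) :
    s₁ = (n - 1) * (n - 2) / 2 ∧ s₂ = n * (n - 3) / 2 ∧ s₃ = n - 1 := by
  have hNpos : 0 < n * (n - 1) := Nat.mul_pos (by omega) (by omega)
  have hN12 : 12 ≤ n * (n - 1) := by
    have := Nat.mul_le_mul hn (show 3 ≤ n - 1 by omega)
    omega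
  haveI : Nonempty (Fin (n * (n - 1))) := ⟨⟨0, hNpos⟩⟩
  -- the roots of the quadratic factor
  obtain ⟨p, hp⟩ := IsAlgClosed.exists_root (k := ℂ) (X ^ 2 + X + C ((n : ℂ) - 2))
    (by
      have hdq : (X ^ 2 + X + C ((n : ℂ) - 2)).degree = 2 := by compute_degree!
      rw [hdq]; decide)
  have hpev : p ^ 2 + p + ((n : ℂ) - 2) = 0 := by
    have := hp; simp [Polynomial.IsRoot, eval_add, eval_pow] at this; linear_combination this
  set q : ℂ := -1 - p with hqdef
  have hfac : (X ^ 2 + X + C ((n : ℂ) - 2) : ℂ[X]) = (X - C p) * (X - C q) := by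
    have hc : (C ((n : ℂ) - 2) : ℂ[X]) = C (- p ^2 - p) := by
      congr 1; linear_combination hpev
    rw [hc, hqdef]
    simp only [map_sub, map_neg, map_pow, map_one]
    ring
  -- compute the multiset of roots
  have hX1 : (X - (1:ℂ[X])) = X - C 1 := by simp
  have hX2 : (X + (1:ℂ[X])) = X - C (-1) := by simp [sub_neg_eq_add]
  have hcp' : A.charpoly =
      (X - C ((n : ℂ) - 2)) * (X - C 1) ^ s₁ * (X - C (-1)) ^ s₂ *
        ((X - C p) * (X - C q)) ^ s₃ := by
    rw [hcp, hX1, hX2, hfac]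
  have nz : ∀ r : ℂ, (X - C r) ≠ (0 : ℂ[X]) := fun r => X_sub_C_ne_zero r
  have hroots : A.charpoly.roots =
      {(n : ℂ) - 2} + s₁ • {(1:ℂ)} + s₂ • {(-1:ℂ)} + s₃ • ({p} + {q}) := by
    have nzq : ((X - C p) * (X - C q) : ℂ[X]) ≠ 0 := mul_ne_zero (nz p) (nz q)
    rw [hcp',
      Polynomial.roots_mul (mul_ne_zero (mul_ne_zero (mul_ne_zero (nz _) (pow_ne_zero _ (nz _)))
        (pow_ne_zero _ (nz _))) (pow_ne_zero _ nzq)),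
      Polynomial.roots_mul (mul_ne_zero (mul_ne_zero (nz _) (pow_ne_zero _ (nz _)))
        (pow_ne_zero _ (nz _))),
      Polynomial.roots_mul (mul_ne_zero (nz _) (pow_ne_zero _ (nz _))),
      Polynomial.roots_pow, Polynomial.roots_pow,
      Polynomial.roots_pow, Polynomial.roots_mul nzq,
      Polynomial.roots_X_sub_C, Polynomial.roots_X_sub_C, Polynomial.roots_X_sub_C,
      Polynomial.roots_X_sub_C, Polynomial.roots_X_sub_C]
  -- first equation, from the trace
  have hone : ∀ (k : ℕ) (x : ℂ), (k • ({x} : Multiset ℂ)).sum = k * x := by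
    intro k x
    rw [Multiset.nsmul_singleton, Multiset.sum_replicate, nsmul_eq_mul]
  have hmapone : ∀ (k : ℕ) (x : ℂ) (f : ℂ → ℂ),
      ((k • ({x} : Multiset ℂ)).map f).sum = k * f x := by
    intro k x f
    rw [Multiset.nsmul_singleton, Multiset.map_replicate, Multiset.sum_replicate, nsmul_eq_mul]
  have hsum : A.charpoly.roots.sum = ((n : ℂ) - 2) + s₁ * 1 + s₂ * (-1) + s₃ * (p + q) := by
    rw [hroots, show ({p} + {q} : Multiset ℂ) = {p} + {q} from rfl]
    rw [smul_add s₃ ({p} : Multiset ℂ) ({q} : Multiset ℂ)]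
    simp only [Multiset.sum_add, Multiset.sum_singleton, hone]
    ring
  have E1 : ((n : ℂ) - 2) + s₁ - s₂ - s₃ = 0 := by
    have := Matrix.trace_eq_sum_roots_charpoly A
    rw [htr1, hsum] at this
    have hpq : p + q = -1 := by rw [hqdef]; ring
    rw [hpq] at this
    linear_combination -this
  -- second equation, from the trace of the square
  have hdeg : A.charpoly.natDegree = n * (n - 1) := by
    rw [Matrix.charpoly_natDegree_eq_dim]; simp
  have hcard : Multiset.card A.charpoly.roots = A.charpoly.natDegree := by
    rw [hroots, hdeg]
    simp only [Multiset.card_add, Multiset.card_nsmul, Multiset.card_singleton]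
    generalize hNg : n * (n - 1) = N at hs hNpos ⊢
    omega
  have hc2 : (Matrix.charpolyRev A).coeff 2 = 0 := by
    have := trace_sq A
    rw [htr1, htr2] at this
    linear_combination this / 2
  have hb : A.charpoly.coeff (n * (n - 1) - 2) = 0 := by
    have hrev := Matrix.reverse_charpoly A
    have := congrArg (fun pp : ℂ[X] => pp.coeff 2) hrev
    rw [Polynomial.coeff_reverse, hdeg, Polynomial.revAt_le (by omega)] at this
    rw [this, hc2]
  have hesymm : A.charpoly.roots.esymm 2 = 0 := by
    have := Polynomial.coeff_eq_esymm_roots_of_card hcard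
      (k := n * (n - 1) - 2) (by rw [hdeg]; omega)
    rw [hdeg] at this
    rw [show n * (n - 1) - (n * (n - 1) - 2) = 2 by omega] at this
    rw [(Matrix.charpoly_monic A).leadingCoeff] at this
    rw [hb] at this
    simpa using this.symm
  have hsumsq : (A.charpoly.roots.map (fun x => x ^ 2)).sum = 0 := by
    have hms := multiset_sum_sq A.charpoly.roots
    have h0 : A.charpoly.roots.sum = 0 := by
      rw [← Matrix.trace_eq_sum_roots_charpoly A, htr1]
    rw [h0, hesymm] at hms
    linear_combination -hms
  have E2 : ((n : ℂ) - 2) ^ 2 + s₁ + s₂ + s₃ * (1 - 2 * ((n : ℂ) - 2)) = 0 := by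
    have hmap : (A.charpoly.roots.map (fun x => x ^ 2)).sum =
        ((n : ℂ) - 2) ^ 2 + s₁ * 1 + s₂ * 1 + s₃ * (p ^ 2 + q ^ 2) := by
      rw [hroots, smul_add s₃ ({p} : Multiset ℂ) ({q} : Multiset ℂ)]
      simp only [Multiset.map_add, Multiset.sum_add, Multiset.map_singleton,
        Multiset.sum_singleton, hmapone]
      ring
    have hpq2 : p ^ 2 + q ^ 2 = 1 - 2 * ((n : ℂ) - 2) := by
      rw [hqdef]; linear_combination 2 * hpev
    rw [hsumsq] at hmap
    rw [hpq2] at hmap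
    linear_combination -hmap
  -- the cast of hs
  have hsC : (s₁ : ℂ) + s₂ + 2 * s₃ = (n : ℂ) * ((n : ℂ) - 1) - 1 := by
    have : ((s₁ + s₂ + 2 * s₃ : ℕ) : ℂ) = ((n * (n - 1) - 1 : ℕ) : ℂ) := by
      rw [hs]
    push_cast [Nat.cast_sub (by omega : 1 ≤ n * (n - 1)), Nat.cast_sub (by omega : 1 ≤ n)] at this
    linear_combination this
  -- solve the linear system
  have h2n : (2 * (n : ℂ) - 3) ≠ 0 := by
    have h33 : (3 : ℕ) ≤ 2 * n := by omega
    have hne : (2 * n - 3 : ℕ) ≠ 0 := by omega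
    intro h
    apply hne
    have h0 : ((2 * n - 3 : ℕ) : ℂ) = 0 := by
      push_cast [Nat.cast_sub h33]
      linear_combination h
    exact_mod_cast h0
  have hs3C : (s₃ : ℂ) = (n : ℂ) - 1 := by
    apply mul_left_cancel₀ h2n
    linear_combination hsC - E2
  have hs3 : s₃ = n - 1 := by
    have : ((s₃ : ℕ) : ℂ) = ((n - 1 : ℕ) : ℂ) := by
      push_cast [Nat.cast_sub (by omega : 1 ≤ n)]; exact hs3C
    exact_mod_cast this
  have hs1 : 2 * s₁ = (n - 1) * (n - 2) := by
    have h1C : 2 * (s₁ : ℂ) = ((n : ℂ) - 1) * ((n : ℂ) - 2) := by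
      linear_combination E1 + hsC - hs3C
    have : ((2 * s₁ : ℕ) : ℂ) = (((n - 1) * (n - 2) : ℕ) : ℂ) := by
      push_cast [Nat.cast_sub (by omega : 1 ≤ n), Nat.cast_sub (by omega : 2 ≤ n)]
      exact h1C
    exact_mod_cast this
  have hs2 : 2 * s₂ = n * (n - 3) := by
    have h2C : 2 * (s₂ : ℂ) = (n : ℂ) * ((n : ℂ) - 3) := by
      linear_combination -E1 + hsC - 3 * hs3C
    have : ((2 * s₂ : ℕ) : ℂ) = ((n * (n - 3) : ℕ) : ℂ) := by
      push_cast [Nat.cast_sub (by omega : 3 ≤ n)]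
      exact h2C
    exact_mod_cast this
  refine ⟨?_, ?_, hs3⟩
  · set a := (n - 1) * (n - 2) with ha
    omega
  · set a := n * (n - 3) with ha
    omega
end
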